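/- (Lemma 3.1) Let G = G₁ ∪ G₂ ∪ G₃ be a connected graph, where G₁, G₂, G₃ are connected subgraphs, each with at least 2 vertices, such that V(Gᵢ) ∩ V(Gⱼ) = {v₀} for all 1 ≤ i ≠ j ≤ 3 and every edge of G lies in some Gᵢ. Let u ∈ V(G₂)\{v₀}, and let G̃ be the graph obtained from G by moving G₃ from v₀ to u. Let x be a positive (Perron) eigenvector of Q_D(G) corresponding to ρ_Q(G), writing x_v = x(v). If Σ_{v_i ∈ V(G₃)\{v₀}} Σ_{v_j ∈ V(G₁)} (x_{v_i} + x_{v_j})² ≥ Σ_{v_i ∈ V(G₃)\{v₀}} Σ_{v_j ∈ V(G₂)} (x_{v_i} + x_{v_j})², then ρ_Q(G̃) > ρ_Q(G). -/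

import Mathlib

open Matrix Finset

/-- The transmission of a vertex: sum of distances to all vertices. -/
noncomputable def transmission {V : Type*} [Fintype V] (G : SimpleGraph V) (u : V) : ℝ :=
  ∑ w : V, (G.dist u w : ℝ)

/-- The distance signless Laplacian matrix `Q_D(G) = Tr(G) + D(G)`. -/
noncomputable def distSignlessLaplacian {V : Type*} [Fintype V] (G : SimpleGraph V) :
    Matrix V V ℝ := fun u v =>
  letI := Classical.decEq V
  (if u = v then transmission G u else 0) + (G.dist u v : ℝ)

/-- The largest eigenvalue of the distance signless Laplacian. -/
noncomputable def rhoQ {V : Type*} [Fintype V] (G : SimpleGraph V) : ℝ :=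
  sSup {μ : ℝ | ∃ x : V → ℝ, x ≠ 0 ∧ (distSignlessLaplacian G).mulVec x = μ • x}

/-!
Put `A = V(G₃) \ {v₀}`. Inside `A` and inside its complement, distances in `G̃` are at least
those in `G`, while for `a ∈ A`, `b ∉ A` the distance `d(a, v₀) + d(v₀, b)` becomes
`d(a, v₀) + d(u, b)`. Since `2 xᵀ Q_D x = ∑_{a,b} d(a, b) (x_a + x_b)²`, the quadratic form of the
Perron vector grows by at least `∑_{a ∈ A} ∑_{b ∉ A} (d(u, b) - d(v₀, b)) (x_a + x_b)²`. The bracket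
is `d(u, v₀)` on `V(G₁)` and at least `-d(u, v₀)` on `V(G₂) \ {v₀}`, so the hypothesis on `x`
makes the gain positive, and `ρ_Q(G̃) ≥ xᵀ Q_D(G̃) x / xᵀ x > xᵀ Q_D(G) x / xᵀ x = ρ_Q(G)`.
-/

namespace Matrix.IsHermitian

variable {n : Type*} [Fintype n] [DecidableEq n] {A : Matrix n n ℝ}

theorem dotProduct_mulVec_le_iSup_eigenvalues (hA : A.IsHermitian) (y : n → ℝ) :
    y ⬝ᵥ A *ᵥ y ≤ (⨆ i, hA.eigenvalues i) * (y ⬝ᵥ y) := by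
  set b := hA.eigenvectorBasis
  have hinner : ∀ z : n → ℝ, ∑ i, (b i ⬝ᵥ y) * (b i ⬝ᵥ z) = y ⬝ᵥ z := fun z => by
    simpa [EuclideanSpace.inner_eq_star_dotProduct, dotProduct_comm] using
      b.sum_inner_mul_inner (WithLp.toLp 2 y) (WithLp.toLp 2 z)
  have hb : ∀ i, b i ⬝ᵥ A *ᵥ y = hA.eigenvalues i * (b i ⬝ᵥ y) := fun i => by
    have hT : Aᵀ = A := by rw [← conjTranspose_eq_transpose_of_trivial, hA.eq]
    rw [dotProduct_mulVec, ← mulVec_transpose, hT, hA.mulVec_eigenvectorBasis, smul_dotProduct,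
      smul_eq_mul]
  rw [← hinner, ← hinner, mul_sum]
  refine sum_le_sum fun i _ => ?_
  rw [hb, mul_left_comm]
  exact mul_le_mul_of_nonneg_right (le_ciSup (Set.finite_range _).bddAbove i) (mul_self_nonneg _)

theorem isGreatest_iSup_eigenvalues [Nonempty n] (hA : A.IsHermitian) :
    IsGreatest {μ | ∃ x, x ≠ 0 ∧ A *ᵥ x = μ • x} (⨆ i, hA.eigenvalues i) := by
  refine ⟨?_, fun μ ⟨x, hx, hAx⟩ => ?_⟩
  · obtain ⟨i, hi⟩ := exists_eq_ciSup_of_finite (f := hA.eigenvalues)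
    exact ⟨hA.eigenvectorBasis i,
      (WithLp.ofLp_eq_zero (p := 2)).not.2 (hA.eigenvectorBasis.orthonormal.ne_zero i),
      hi ▸ hA.mulVec_eigenvectorBasis i⟩
  · have hxx : 0 < x ⬝ᵥ x := by simpa using dotProduct_self_star_pos_iff.2 hx
    have := hA.dotProduct_mulVec_le_iSup_eigenvalues x
    rw [hAx, dotProduct_smul, smul_eq_mul] at this
    exact le_of_mul_le_mul_right this hxx

end Matrix.IsHermitian

section DistSignlessLaplacian

variable {V : Type*} [Fintype V]

theorem distSignlessLaplacian_isHermitian (G : SimpleGraph V) :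
    (distSignlessLaplacian G).IsHermitian := by
  ext a b
  by_cases h : a = b
  · subst h; rfl
  · simp [distSignlessLaplacian, h, Ne.symm h, G.dist_comm]

theorem distSignlessLaplacian_mulVec_apply (G : SimpleGraph V) (x : V → ℝ) (a : V) :
    (distSignlessLaplacian G *ᵥ x) a = ∑ b, (G.dist a b : ℝ) * (x a + x b) := by
  classical
  simp [mulVec, dotProduct, distSignlessLaplacian, transmission, add_mul, mul_add, sum_mul,
    sum_add_distrib]

theorem two_mul_dotProduct_distSignlessLaplacian_mulVec (G : SimpleGraph V) (x : V → ℝ) :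
    2 * (x ⬝ᵥ distSignlessLaplacian G *ᵥ x) = ∑ a, ∑ b, (G.dist a b : ℝ) * (x a + x b) ^ 2 := by
  have hswap : ∑ a, ∑ b, x a * ((G.dist a b : ℝ) * (x a + x b)) =
      ∑ a, ∑ b, x b * ((G.dist a b : ℝ) * (x a + x b)) := by
    rw [sum_comm]
    refine sum_congr rfl fun a _ => sum_congr rfl fun b _ => ?_
    rw [G.dist_comm]; ring
  have hexp : x ⬝ᵥ distSignlessLaplacian G *ᵥ x =
      ∑ a, ∑ b, x a * ((G.dist a b : ℝ) * (x a + x b)) := by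
    simp only [dotProduct, distSignlessLaplacian_mulVec_apply, mul_sum]
  rw [hexp, two_mul]
  nth_rewrite 2 [hswap]
  rw [← sum_add_distrib]
  refine sum_congr rfl fun a _ => ?_
  rw [← sum_add_distrib]
  refine sum_congr rfl fun b _ => ?_
  ring

theorem dotProduct_distSignlessLaplacian_mulVec_le (G : SimpleGraph V) (y : V → ℝ) :
    y ⬝ᵥ distSignlessLaplacian G *ᵥ y ≤ rhoQ G * (y ⬝ᵥ y) := by
  classical
  cases isEmpty_or_nonempty V
  · simp [dotProduct]
  rw [rhoQ, (distSignlessLaplacian_isHermitian G).isGreatest_iSup_eigenvalues.csSup_eq]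
  exact (distSignlessLaplacian_isHermitian G).dotProduct_mulVec_le_iSup_eigenvalues y

theorem rhoQ_lt_rhoQ_of_dotProduct_lt {G G' : SimpleGraph V} {x : V → ℝ} (hx : x ≠ 0)
    (heig : distSignlessLaplacian G *ᵥ x = rhoQ G • x)
    (h : x ⬝ᵥ distSignlessLaplacian G *ᵥ x < x ⬝ᵥ distSignlessLaplacian G' *ᵥ x) :
    rhoQ G < rhoQ G' := by
  have hxx : 0 < x ⬝ᵥ x := by simpa using dotProduct_self_star_pos_iff.2 hx
  rw [heig, dotProduct_smul, smul_eq_mul] at h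
  exact lt_of_mul_lt_mul_right (h.trans_le (dotProduct_distSignlessLaplacian_mulVec_le G' x))
    hxx.le

end DistSignlessLaplacian

section FinsetSums

variable {ι : Type*} [DecidableEq ι]

theorem two_mul_sum_sum_compl_le [Fintype ι] (A : Finset ι) (F : ι → ι → ℝ)
    (hF : ∀ a b, F a b = F b a) (hsame : ∀ a b, (a ∈ A ↔ b ∈ A) → 0 ≤ F a b) :
    2 * ∑ a ∈ A, ∑ b ∈ Aᶜ, F a b ≤ ∑ a, ∑ b, F a b := by
  have hsplit : ∀ a, ∑ b, F a b = ∑ b ∈ A, F a b + ∑ b ∈ Aᶜ, F a b := fun a =>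
    (sum_add_sum_compl A (F a)).symm
  have hswap : ∑ a ∈ Aᶜ, ∑ b ∈ A, F a b = ∑ a ∈ A, ∑ b ∈ Aᶜ, F a b := by
    rw [sum_comm]; simp only [hF]
  have hAA : 0 ≤ ∑ a ∈ A, ∑ b ∈ A, F a b := sum_nonneg fun a ha => sum_nonneg fun b hb =>
    hsame a b (iff_of_true ha hb)
  have hCC : 0 ≤ ∑ a ∈ Aᶜ, ∑ b ∈ Aᶜ, F a b := sum_nonneg fun a ha => sum_nonneg fun b hb =>
    hsame a b (iff_of_false (mem_compl.1 ha) (mem_compl.1 hb))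
  rw [← sum_add_sum_compl A, sum_congr rfl fun a _ => hsplit a, sum_congr rfl fun a _ => hsplit a,
    sum_add_distrib, sum_add_distrib, hswap]
  linarith

theorem sum_sum_union_erase_mul_pos {A B₁ B₂ : Finset ι} {v : ι}
    (hA : A.Nonempty) (hv : v ∈ B₂) (hB : Disjoint B₁ (B₂.erase v)) {φ : ι → ℝ}
    {w : ι → ι → ℝ} {D : ℝ} (hD : 0 < D) (h₁ : ∀ b ∈ B₁, D ≤ φ b) (h₂ : ∀ b ∈ B₂, -D ≤ φ b)
    (hw : ∀ a b, 0 < w a b) (hle : ∑ a ∈ A, ∑ b ∈ B₂, w a b ≤ ∑ a ∈ A, ∑ b ∈ B₁, w a b) :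
    0 < ∑ a ∈ A, ∑ b ∈ B₁ ∪ B₂.erase v, φ b * w a b := by
  have hrow : ∀ a, D * (∑ b ∈ B₁, w a b - ∑ b ∈ B₂, w a b + w a v) ≤
      ∑ b ∈ B₁ ∪ B₂.erase v, φ b * w a b := fun a => by
    have e₁ : D * ∑ b ∈ B₁, w a b ≤ ∑ b ∈ B₁, φ b * w a b := by
      rw [mul_sum]
      exact sum_le_sum fun b hb => mul_le_mul_of_nonneg_right (h₁ b hb) (hw a b).le
    have e₂ : -D * ∑ b ∈ B₂.erase v, w a b ≤ ∑ b ∈ B₂.erase v, φ b * w a b := by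
      rw [mul_sum]
      exact sum_le_sum fun b hb =>
        mul_le_mul_of_nonneg_right (h₂ b (mem_of_mem_erase hb)) (hw a b).le
    rw [sum_union hB, ← sum_erase_add B₂ _ hv]
    linarith
  have hsum := sum_le_sum fun a (_ : a ∈ A) => hrow a
  rw [← mul_sum, sum_add_distrib, sum_sub_distrib] at hsum
  have hpos : 0 < D * (∑ a ∈ A, ∑ b ∈ B₁, w a b - ∑ a ∈ A, ∑ b ∈ B₂, w a b + ∑ a ∈ A, w a v) :=
    mul_pos hD (by linarith [sum_pos (fun a _ => hw a v) hA])
  linarith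

end FinsetSums

namespace SimpleGraph

variable {V : Type*} {H H' : SimpleGraph V} {A : Set V} {c c' s t : V}

def ExitsVia (H : SimpleGraph V) (A : Set V) (c : V) : Prop :=
  ∀ ⦃a b⦄, H.Adj a b → a ∈ A → b ∉ A → b = c

theorem ExitsVia.mem_support (h : H.ExitsVia A c) :
    ∀ {s t : V} (p : H.Walk s t), s ∈ A → t ∉ A → c ∈ p.support
  | _, _, .nil, hs, ht => (ht hs).elim
  | _, _, .cons (v := y) hadj p, hs, ht => by
    rw [Walk.support_cons]
    by_cases hy : y ∈ A
    · exact List.mem_cons_of_mem _ (h.mem_support p hy ht)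
    · exact h hadj hs hy ▸ List.mem_cons_of_mem _ p.start_mem_support

theorem ExitsVia.dist_add_dist_le (h : H.ExitsVia A c) (hst : H.Reachable s t) (hs : s ∈ A)
    (ht : t ∉ A) : H.dist s c + H.dist c t ≤ H.dist s t := by
  classical
  obtain ⟨p, hp⟩ := hst.exists_walk_length_eq_dist
  have hc := h.mem_support p hs ht
  calc H.dist s c + H.dist c t ≤ (p.takeUntil c hc).length + (p.dropUntil c hc).length :=
        add_le_add (dist_le _) (dist_le _)
    _ = H.dist s t := by rw [← Walk.length_append, p.take_spec hc, hp]

theorem Walk.exists_walk_length_eq_of_adj (p : H'.Walk s t)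
    (h : ∀ a ∈ p.support, ∀ b ∈ p.support, H'.Adj a b → H.Adj a b) :
    ∃ q : H.Walk s t, q.length = p.length := by
  refine ⟨p.transfer H fun e he => ?_, p.length_transfer _⟩
  induction e using Sym2.ind with
  | h a b =>
    exact h a (p.fst_mem_support_of_mem_edges he) b (p.snd_mem_support_of_mem_edges he)
      (p.adj_of_mem_edges he)

/-- `H'` arises from `H` by detaching the part `A`, which hangs at `c` in `H`,
and re-attaching it at `c'`. -/
structure IsMove (H H' : SimpleGraph V) (A : Set V) (c c' : V) : Prop where
  not_mem : c ∉ A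
  not_mem' : c' ∉ A
  adj_iff : ∀ ⦃a b⦄, (a ∈ A ↔ b ∈ A) → (H.Adj a b ↔ H'.Adj a b)
  exitsVia : H.ExitsVia A c
  exitsVia' : H'.ExitsVia A c'
  adj_iff_adj : ∀ a ∈ A, H.Adj a c ↔ H'.Adj a c'

namespace IsMove

theorem symm (hm : H.IsMove H' A c c') : H'.IsMove H A c' c where
  not_mem := hm.not_mem'
  not_mem' := hm.not_mem
  adj_iff _ _ hab := (hm.adj_iff hab).symm
  exitsVia := hm.exitsVia'
  exitsVia' := hm.exitsVia
  adj_iff_adj a ha := (hm.adj_iff_adj a ha).symm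

theorem exists_walk_to_attach (hm : H.IsMove H' A c c') :
    ∀ {s t : V} (p : H'.Walk s t), s ∈ A → t ∉ A → ∃ q : H.Walk s c, q.length ≤ p.length
  | _, _, .nil, hs, ht => (ht hs).elim
  | s, _, .cons (v := y) hadj p, hs, ht => by
    rw [Walk.length_cons]
    by_cases hy : y ∈ A
    · obtain ⟨q, hq⟩ := hm.exists_walk_to_attach p hy ht
      exact ⟨.cons ((hm.adj_iff (iff_of_true hs hy)).2 hadj) q, by simpa using hq⟩
    · have hsc : H.Adj s c := (hm.adj_iff_adj s hs).2 (hm.exitsVia' hadj hs hy ▸ hadj)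
      exact ⟨hsc.toWalk, by simp⟩

theorem exists_walk_length_le (hm : H.IsMove H' A c c') (p : H'.Walk s t)
    (hst : s ∈ A ↔ t ∈ A) : ∃ q : H.Walk s t, q.length ≤ p.length := by
  classical
  by_cases hside : ∀ a ∈ p.bypass.support, (a ∈ A ↔ s ∈ A)
  · obtain ⟨q, hq⟩ := p.bypass.exists_walk_length_eq_of_adj (H := H) fun a ha b hb =>
      (hm.adj_iff (by rw [hside a ha, hside b hb])).2
    exact ⟨q, hq.trans_le p.length_bypass_le_length⟩
  obtain ⟨a, ha, has⟩ := not_forall₂.1 hside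
  by_cases hs : s ∈ A
  · have ha' : a ∉ A := by tauto
    obtain ⟨q₁, hq₁⟩ := hm.exists_walk_to_attach (p.bypass.takeUntil a ha) hs ha'
    obtain ⟨q₂, hq₂⟩ := hm.exists_walk_to_attach (p.bypass.dropUntil a ha).reverse (hst.1 hs) ha'
    refine ⟨q₁.append q₂.reverse, ?_⟩
    have hlen := congrArg Walk.length (p.bypass.take_spec ha)
    simp only [Walk.length_append, Walk.length_reverse] at hlen hq₂ ⊢
    have := p.length_bypass_le_length
    omega
  -- A path between two vertices outside `A` cannot enter `A`: it would meet `c'` twice.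
  · have ha' : a ∈ A := by tauto
    have h₁ := hm.exitsVia'.mem_support (p.bypass.takeUntil a ha).reverse ha' hs
    have h₂ := hm.exitsVia'.mem_support (p.bypass.dropUntil a ha) ha' (hst.not.1 hs)
    have hnodup := p.bypass_isPath.support_nodup
    rw [← p.bypass.take_spec ha, Walk.support_append, List.nodup_append] at hnodup
    rw [Walk.support_reverse, List.mem_reverse] at h₁
    have hne : c' ≠ a := fun h => hm.not_mem' (h ▸ ha')
    rw [Walk.mem_support_iff] at h₂
    exact (hnodup.2.2 c' h₁ c' (h₂.resolve_left hne) rfl).elim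

theorem connected (hm : H.IsMove H' A c c') (hH : H.Connected) : H'.Connected := by
  have hreach : ∀ s, H'.Reachable s c' := fun s => by
    obtain ⟨p⟩ := hH.preconnected s c'
    by_cases hs : s ∈ A
    · exact (hm.symm.exists_walk_to_attach p hs hm.not_mem').elim fun q _ => ⟨q⟩
    · exact (hm.symm.exists_walk_length_le p (iff_of_false hs hm.not_mem')).elim fun q _ => ⟨q⟩
  have := hH.nonempty
  exact ⟨fun s t => (hreach s).trans (hreach t).symm⟩

theorem dist_le_dist (hm : H.IsMove H' A c c') (hH' : H'.Connected) (hst : s ∈ A ↔ t ∈ A) :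
    H.dist s t ≤ H'.dist s t := by
  obtain ⟨p, hp⟩ := hH'.exists_walk_length_eq_dist s t
  obtain ⟨q, hq⟩ := hm.exists_walk_length_le p hst
  exact (dist_le q).trans (hq.trans hp.le)

theorem dist_add_dist_le (hm : H.IsMove H' A c c') (hH' : H'.Connected) (hs : s ∈ A)
    (ht : t ∉ A) : H.dist s c + H.dist c' t ≤ H'.dist s t := by
  obtain ⟨p, hp⟩ := hH'.exists_walk_length_eq_dist s c'
  obtain ⟨q, hq⟩ := hm.exists_walk_to_attach p hs hm.not_mem'
  have h₁ : H.dist s c ≤ H'.dist s c' := (dist_le q).trans (hq.trans hp.le)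
  have h₂ := hm.dist_le_dist hH' (iff_of_false hm.not_mem' ht)
  have h₃ := hm.exitsVia'.dist_add_dist_le (hH'.preconnected s t) hs ht
  omega

theorem dist_add_dist_le_dist_add_dist (hm : H.IsMove H' A c c') (hH : H.Connected)
    (hH' : H'.Connected) (hs : s ∈ A) (ht : t ∉ A) :
    H.dist s t + H.dist c' t ≤ H'.dist s t + H.dist c t := by
  have := hm.dist_add_dist_le hH' hs ht
  have := hH.dist_triangle (u := s) (v := c) (w := t)
  omega

end IsMove

end SimpleGraph

namespace SimpleGraph.IsMove

variable {V : Type*} [Fintype V] [DecidableEq V] {H H' : SimpleGraph V} {A : Finset V} {c c' : V}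

theorem sum_dist_mul_add_le (hm : H.IsMove H' A c c') (hH : H.Connected) (hH' : H'.Connected)
    (w : V → V → ℝ) (hw_symm : ∀ a b, w a b = w b a) (hw : ∀ a b, 0 ≤ w a b) :
    ∑ a, ∑ b, (H.dist a b : ℝ) * w a b +
        2 * ∑ a ∈ A, ∑ b ∈ Aᶜ, ((H.dist c' b : ℝ) - H.dist c b) * w a b ≤
      ∑ a, ∑ b, (H'.dist a b : ℝ) * w a b := by
  set F : V → V → ℝ := fun a b => ((H'.dist a b : ℝ) - H.dist a b) * w a b
  have hF : ∀ a b, F a b = F b a := fun a b => by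
    simp only [F, dist_comm (u := a), hw_symm a b]
  have hsame : ∀ a b, (a ∈ A ↔ b ∈ A) → 0 ≤ F a b := fun a b hab =>
    mul_nonneg (sub_nonneg.2 (mod_cast hm.dist_le_dist hH' (by simpa using hab))) (hw a b)
  have hcross : ∀ a ∈ A, ∀ b ∈ Aᶜ, ((H.dist c' b : ℝ) - H.dist c b) * w a b ≤ F a b :=
    fun a ha b hb => by
      have : (H.dist a b + H.dist c' b : ℝ) ≤ H'.dist a b + H.dist c b := mod_cast
        hm.dist_add_dist_le_dist_add_dist hH hH' (by simpa using ha) (by simpa using hb)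
      exact mul_le_mul_of_nonneg_right (by linarith) (hw a b)
  have hhalf := two_mul_sum_sum_compl_le A F hF hsame
  have hsub : ∑ a, ∑ b, F a b = ∑ a, ∑ b, (H'.dist a b : ℝ) * w a b -
      ∑ a, ∑ b, (H.dist a b : ℝ) * w a b := by
    simp only [F, sub_mul, sum_sub_distrib]
  linarith [sum_le_sum fun a ha => sum_le_sum (hcross a ha)]

end SimpleGraph.IsMove

namespace SimpleGraph

variable {V : Type*} [DecidableEq V] {G G' : SimpleGraph V} {S : Finset V} {v₀ u : V}

theorem exitsVia_erase (hS : ∀ a b, G.Adj a b → a ∈ S → a ≠ v₀ → b ∈ S) :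
    G.ExitsVia ↑(S.erase v₀) v₀ := fun a b hab ha hb => by
  simp only [mem_coe, mem_erase] at ha hb
  exact not_not.1 fun h => hb ⟨h, hS a b hab ha.2 ha.1⟩

theorem isMove_of_adj_iff (hu : u ∉ S) (hS : ∀ a b, G.Adj a b → a ∈ S → a ≠ v₀ → b ∈ S)
    (hG' : ∀ a b, G'.Adj a b ↔
      ((G.Adj a b ∧ ¬(a = v₀ ∧ b ∈ S ∧ G.Adj v₀ b) ∧ ¬(b = v₀ ∧ a ∈ S ∧ G.Adj v₀ a)) ∨
        (a = u ∧ b ∈ S ∧ G.Adj v₀ b) ∨ (b = u ∧ a ∈ S ∧ G.Adj v₀ a))) :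
    G.IsMove G' ↑(S.erase v₀) v₀ u where
  not_mem := by simp
  not_mem' := by simp [hu]
  adj_iff a b hab := by
    simp only [mem_coe, mem_erase] at hab
    rw [hG']
    grind [G.irrefl, G.adj_symm]
  exitsVia := exitsVia_erase hS
  exitsVia' a b hab ha hb := by
    simp only [mem_coe, mem_erase] at ha hb
    rw [hG'] at hab
    grind [G.irrefl, G.adj_symm]
  adj_iff_adj a ha := by
    simp only [mem_coe, mem_erase] at ha
    rw [hG']
    grind [G.irrefl, G.adj_symm]

end SimpleGraph

section Decomposition

variable {V : Type*} [DecidableEq V]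

theorem mem_of_adj_of_inter_eq {G : SimpleGraph V} {S T₁ T₂ : Finset V} {v₀ : V}
    (h₁ : T₁ ∩ S = {v₀}) (h₂ : T₂ ∩ S = {v₀})
    (hedges : ∀ a b, G.Adj a b → (a ∈ T₁ ∧ b ∈ T₁) ∨ (a ∈ T₂ ∧ b ∈ T₂) ∨ (a ∈ S ∧ b ∈ S))
    {a b : V} (hab : G.Adj a b) (ha : a ∈ S) (hav : a ≠ v₀) : b ∈ S := by
  simp only [Finset.ext_iff, mem_inter, mem_singleton] at h₁ h₂
  have := h₁ a; have := h₂ a; have := hedges a b hab; tauto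

theorem compl_erase_eq_union_erase [Fintype V] {S₁ S₂ S₃ : Finset V} {v₀ : V}
    (hcover : S₁ ∪ S₂ ∪ S₃ = univ) (h12 : S₁ ∩ S₂ = {v₀}) (h13 : S₁ ∩ S₃ = {v₀})
    (h23 : S₂ ∩ S₃ = {v₀}) : (S₃.erase v₀)ᶜ = S₁ ∪ S₂.erase v₀ := by
  simp only [Finset.ext_iff, mem_inter, mem_singleton, mem_union, mem_univ, iff_true]
    at hcover h12 h13 h23 ⊢
  intro b
  simp only [mem_compl, mem_erase]
  have := h12 b; have := h13 b; have := h23 b; have := hcover b; tauto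

theorem sum_sum_dist_sub_dist_mul_pos [Fintype V] {G : SimpleGraph V} (hG : G.Connected)
    {A S₁ S₂ : Finset V} {v₀ u : V} (hA : A.Nonempty) (h12 : S₁ ∩ S₂ = {v₀})
    (hS₂ : ∀ a b, G.Adj a b → a ∈ S₂ → a ≠ v₀ → b ∈ S₂) (hu : u ∈ S₂) (huv₀ : u ≠ v₀)
    {w : V → V → ℝ} (hw : ∀ a b, 0 < w a b)
    (hle : ∑ a ∈ A, ∑ b ∈ S₂, w a b ≤ ∑ a ∈ A, ∑ b ∈ S₁, w a b) :
    0 < ∑ a ∈ A, ∑ b ∈ S₁ ∪ S₂.erase v₀, ((G.dist u b : ℝ) - G.dist v₀ b) * w a b := by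
  simp only [Finset.ext_iff, mem_inter, mem_singleton] at h12
  have h₁ : ∀ b ∈ S₁, (G.dist u v₀ : ℝ) ≤ G.dist u b - G.dist v₀ b := fun b hb => by
    have : (G.dist u v₀ + G.dist v₀ b : ℝ) ≤ G.dist u b := mod_cast
      (SimpleGraph.exitsVia_erase hS₂).dist_add_dist_le (hG.preconnected u b)
        (by simp [hu, huv₀]) (by simpa using fun hb₂ => (h12 b).1 ⟨hb, hb₂⟩)
    linarith
  have h₂ : ∀ b ∈ S₂, -(G.dist u v₀ : ℝ) ≤ G.dist u b - G.dist v₀ b := fun b _ => by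
    have h := hG.dist_triangle (u := v₀) (v := u) (w := b)
    rw [G.dist_comm (u := v₀) (v := u)] at h
    have : (G.dist v₀ b : ℝ) ≤ G.dist u v₀ + G.dist u b := mod_cast h
    linarith
  have hB : Disjoint S₁ (S₂.erase v₀) := disjoint_left.2 fun b hb₁ hb₂ =>
    (mem_erase.1 hb₂).1 ((h12 b).1 ⟨hb₁, (mem_erase.1 hb₂).2⟩)
  exact sum_sum_union_erase_mul_pos hA ((h12 v₀).2 rfl).2 hB
    (mod_cast hG.pos_dist_of_ne huv₀) h₁ h₂ hw hle

end Decomposition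

theorem rhoQ_graft_transformation_general {V : Type} [Fintype V] [DecidableEq V]
    (G Gt : SimpleGraph V) (hG : G.Connected)
    (S₁ S₂ S₃ : Finset V) (v₀ u : V)
    (hcover : S₁ ∪ S₂ ∪ S₃ = Finset.univ)
    (h12 : S₁ ∩ S₂ = {v₀}) (h13 : S₁ ∩ S₃ = {v₀}) (h23 : S₂ ∩ S₃ = {v₀})
    (hc3 : 2 ≤ S₃.card)
    (hedges : ∀ a b : V, G.Adj a b →
      (a ∈ S₁ ∧ b ∈ S₁) ∨ (a ∈ S₂ ∧ b ∈ S₂) ∨ (a ∈ S₃ ∧ b ∈ S₃))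
    (hu : u ∈ S₂) (huv₀ : u ≠ v₀)
    (hGt : ∀ a b : V, Gt.Adj a b ↔
      ((G.Adj a b ∧ ¬(a = v₀ ∧ b ∈ S₃ ∧ G.Adj v₀ b) ∧ ¬(b = v₀ ∧ a ∈ S₃ ∧ G.Adj v₀ a)) ∨
        (a = u ∧ b ∈ S₃ ∧ G.Adj v₀ b) ∨ (b = u ∧ a ∈ S₃ ∧ G.Adj v₀ a)))
    (x : V → ℝ) (hpos : ∀ v : V, 0 < x v)
    (heig : (distSignlessLaplacian G).mulVec x = rhoQ G • x)
    (hineq : ∑ i ∈ S₃.erase v₀, ∑ j ∈ S₁, (x i + x j) ^ 2 ≥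
      ∑ i ∈ S₃.erase v₀, ∑ j ∈ S₂, (x i + x j) ^ 2) :
    rhoQ Gt > rhoQ G := by
  have hS₂ : ∀ a b, G.Adj a b → a ∈ S₂ → a ≠ v₀ → b ∈ S₂ := fun _ _ hab =>
    mem_of_adj_of_inter_eq h12 (by rw [inter_comm, h23])
      (fun a b h => (hedges a b h).imp_right Or.symm) hab
  have hu₃ : u ∉ S₃ := fun h => huv₀ (by simpa [h23] using mem_inter.2 ⟨hu, h⟩)
  have hmove := SimpleGraph.isMove_of_adj_iff hu₃
    (fun _ _ hab => mem_of_adj_of_inter_eq h13 h23 hedges hab) hGt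
  have hcross := sum_sum_dist_sub_dist_mul_pos hG
    (one_lt_card_iff_nontrivial.1 hc3).erase_nonempty h12 hS₂ hu huv₀
    (fun a b => by nlinarith [hpos a, hpos b]) hineq
  rw [← compl_erase_eq_union_erase hcover h12 h13 h23] at hcross
  have hsum := hmove.sum_dist_mul_add_le hG (hmove.connected hG) (fun a b => (x a + x b) ^ 2)
    (fun a b => by ring) (fun a b => sq_nonneg _)
  refine rhoQ_lt_rhoQ_of_dotProduct_lt (fun h => (hpos v₀).ne' (congrFun h v₀)) heig ?_
  linarith [two_mul_dotProduct_distSignlessLaplacian_mulVec G x,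
    two_mul_dotProduct_distSignlessLaplacian_mulVec Gt x]

/-- Lemma 3.1: with the same decomposition `G = G₁ ∪ G₂ ∪ G₃` as in Lemma 2.1, `u ∈ S₂ \ {v₀}`,
`G̃` obtained from `G` by moving `G₃` from `v₀` to `u`, and `x` a Perron (positive) eigenvector
of `Q_D(G)` for `ρ_Q(G)`: if
`∑_{i ∈ S₃\{v₀}} ∑_{j ∈ S₁} (xᵢ + xⱼ)² ≥ ∑_{i ∈ S₃\{v₀}} ∑_{j ∈ S₂} (xᵢ + xⱼ)²`
then `ρ_Q(G̃) > ρ_Q(G)`. -/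
theorem rhoQ_graft_transformation {V : Type} [Fintype V] [DecidableEq V]
    (G Gt : SimpleGraph V) (hG : G.Connected)
    (S₁ S₂ S₃ : Finset V) (v₀ u : V)
    (hcover : S₁ ∪ S₂ ∪ S₃ = Finset.univ)
    (h12 : S₁ ∩ S₂ = {v₀}) (h13 : S₁ ∩ S₃ = {v₀}) (h23 : S₂ ∩ S₃ = {v₀})
    (hc1 : 2 ≤ S₁.card) (hc2 : 2 ≤ S₂.card) (hc3 : 2 ≤ S₃.card)
    (hconn1 : (SimpleGraph.induce (↑S₁ : Set V) G).Connected)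
    (hconn2 : (SimpleGraph.induce (↑S₂ : Set V) G).Connected)
    (hconn3 : (SimpleGraph.induce (↑S₃ : Set V) G).Connected)
    (hedges : ∀ a b : V, G.Adj a b →
      (a ∈ S₁ ∧ b ∈ S₁) ∨ (a ∈ S₂ ∧ b ∈ S₂) ∨ (a ∈ S₃ ∧ b ∈ S₃))
    (hu : u ∈ S₂) (huv₀ : u ≠ v₀)
    (hGt : ∀ a b : V, Gt.Adj a b ↔
      ((G.Adj a b ∧ ¬(a = v₀ ∧ b ∈ S₃ ∧ G.Adj v₀ b) ∧ ¬(b = v₀ ∧ a ∈ S₃ ∧ G.Adj v₀ a)) ∨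
        (a = u ∧ b ∈ S₃ ∧ G.Adj v₀ b) ∨ (b = u ∧ a ∈ S₃ ∧ G.Adj v₀ a)))
    (x : V → ℝ) (hpos : ∀ v : V, 0 < x v)
    (heig : (distSignlessLaplacian G).mulVec x = rhoQ G • x)
    (hineq : ∑ i ∈ S₃.erase v₀, ∑ j ∈ S₁, (x i + x j) ^ 2 ≥
      ∑ i ∈ S₃.erase v₀, ∑ j ∈ S₂, (x i + x j) ^ 2) :
    rhoQ Gt > rhoQ G :=
  rhoQ_graft_transformation_general G Gt hG S₁ S₂ S₃ v₀ u hcover h12 h13 h23 hc3 hedges hu huv₀ hGt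
    x hpos heig hineq
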